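/- The number Z_n of skew-symmetric (n,n)-clans satisfies Z_0 = 1, Z_1 = 3, and the recurrence Z_n = 3·Z_{n−1} + 2(n−1)·Z_{n−2} for all n ≥ 2. -/

import Mathlib

/-!
A skew-symmetric clan is a pair `(σ, s)` where `σ` is an involution of the positions commuting
with the reversal `ρ`, and `s` is a sign on the fixed points of `σ` with `s (ρ x) = !s x`.
Fix a position `a` and look at `σ a`. If `σ a = a` (two choices of sign) or `σ a = ρ a`, the
clan is an arbitrary clan on the other `2n - 2` positions. Otherwise `σ a = j` for one of the
`2n - 2` other positions, this forces `σ` on `{a, ρ a, j, ρ j}`, and the clan is an arbitrary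
clan on the remaining `2n - 4` positions. For this induction to make sense, clans are taken on
any finite `ρ`-stable set `S` of a type with a fixed-point-free involution `ρ`.
-/

/-- A skew-symmetric `(n,n)`-clan, encoded (via the standard bijection with signed
involutions) as a pair `(σ, s)` where `σ` is an involution of the `2n` positions whose
2-cycles are the pairs of positions carrying matching natural numbers, and `s` records
the signs at the fixed points (`true` = `+`, `false` = `−`; `s` is normalized to `true`
on non-fixed points).  The conditions say: `σ` is an involution; `s` is normalized;
there are equally many `+`'s and `−`'s among the sign symbols; and the clan equals its
reverse with all signs interchanged (`Fin.rev` is the reflection `i ↦ 2n+1−i`). -/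
def IsSkewClan (n : ℕ) (σ : Equiv.Perm (Fin (2 * n))) (s : Fin (2 * n) → Bool) : Prop :=
  Function.Involutive σ ∧
  (∀ i, σ i ≠ i → s i = true) ∧
  (Finset.univ.filter (fun i => σ i = i ∧ s i = true)).card =
    (Finset.univ.filter (fun i => σ i = i ∧ s i = false)).card ∧
  (∀ i, σ (Fin.rev i) = Fin.rev (σ i)) ∧
  (∀ i, σ i = i → s (Fin.rev i) = !(s i))

/-- `Z_n`, the number of skew-symmetric `(n,n)`-clans. -/
noncomputable def Znum (n : ℕ) : ℕ :=
  Nat.card {p : Equiv.Perm (Fin (2 * n)) × (Fin (2 * n) → Bool) // IsSkewClan n p.1 p.2}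

open Finset Function

variable {α : Type*}

/-- `IsSkewClan` relative to a support `S`, without the balance condition of `IsSkewClan`,
which follows from `sign_rho`. -/
@[ext]
structure SkewClanOn (ρ : α → α) (S : Finset α) where
  σ : α → α
  sign : α → Bool
  involutive : Involutive σ
  commute : ∀ x, σ (ρ x) = ρ (σ x)
  apply_of_notMem : ∀ x ∉ S, σ x = x
  sign_of_ne : ∀ x, σ x ≠ x → sign x = true
  sign_of_notMem : ∀ x ∉ S, sign x = true
  sign_rho : ∀ x ∈ S, σ x = x → sign (ρ x) = !sign x

lemma rho_mem_iff {ρ : α → α} {B : Finset α} (hρ : Involutive ρ) (hB : ∀ x ∈ B, ρ x ∈ B)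
    {x : α} : ρ x ∈ B ↔ x ∈ B :=
  ⟨fun h => hρ x ▸ hB _ h, hB x⟩

section RhoPair

variable [DecidableEq α] (ρ : α → α)

def rhoPair (a : α) : Finset α := {a, ρ a}

variable {ρ} {S : Finset α} {a : α}

lemma rhoPair_subset (hS : ∀ x ∈ S, ρ x ∈ S) (ha : a ∈ S) : rhoPair ρ a ⊆ S := by
  simp [rhoPair, insert_subset_iff, ha, hS a ha]

lemma card_sdiff_rhoPair (hfp : ∀ x, ρ x ≠ x) (hS : ∀ x ∈ S, ρ x ∈ S) (ha : a ∈ S) :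
    #(S \ rhoPair ρ a) = #S - 2 := by
  rw [card_sdiff_of_subset (rhoPair_subset hS ha), rhoPair, card_pair (hfp a).symm]

variable (hρ : Involutive ρ)
include hρ

lemma rhoPair_rho (a : α) : rhoPair ρ (ρ a) = rhoPair ρ a := by
  rw [rhoPair, rhoPair, hρ, pair_comm]

lemma rho_mem_rhoPair_union {j x : α} (hx : x ∈ rhoPair ρ a ∪ rhoPair ρ j) :
    ρ x ∈ rhoPair ρ a ∪ rhoPair ρ j := by
  simp only [rhoPair, mem_union, mem_insert, mem_singleton] at hx ⊢
  rcases hx with (rfl | rfl) | (rfl | rfl) <;> simp [hρ _]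

lemma rho_mem_sdiff_rhoPair (hS : ∀ x ∈ S, ρ x ∈ S) :
    ∀ x ∈ S \ rhoPair ρ a, ρ x ∈ S \ rhoPair ρ a := by
  have hpair : ∀ y ∈ rhoPair ρ a, ρ y ∈ rhoPair ρ a := fun y hy => by
    simpa using rho_mem_rhoPair_union hρ (mem_union_left (rhoPair ρ a) hy)
  intro x hx
  rw [mem_sdiff] at hx ⊢
  exact ⟨hS x hx.1, fun h => hx.2 ((rho_mem_iff hρ hpair).mp h)⟩

end RhoPair

namespace SkewClanOn

variable {ρ : α → α} {S B : Finset α}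

instance [Finite α] : Finite (SkewClanOn ρ S) :=
  Finite.of_injective (fun c => (c.σ, c.sign)) fun c d h => by
    obtain ⟨h₁, h₂⟩ := Prod.ext_iff.mp h
    exact SkewClanOn.ext h₁ h₂

lemma apply_mem_iff (c : SkewClanOn ρ S) {x : α} : c.σ x ∈ S ↔ x ∈ S := by
  refine ⟨fun h => ?_, fun h => ?_⟩
  · by_contra hx
    exact hx (c.apply_of_notMem x hx ▸ h)
  · by_contra hx
    have := c.apply_of_notMem _ hx
    rw [c.involutive] at this
    exact hx (this ▸ h)

section Glue

variable [DecidableEq α] (hρ : Involutive ρ) (hB : ∀ x ∈ B, ρ x ∈ B)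
include hρ hB

def glue (hBS : B ⊆ S) (c₀ : SkewClanOn ρ B) (c : SkewClanOn ρ (S \ B)) : SkewClanOn ρ S where
  σ x := if x ∈ B then c₀.σ x else c.σ x
  sign x := if x ∈ B then c₀.sign x else c.sign x
  involutive x := by
    by_cases hx : x ∈ B
    · simp [hx, c₀.apply_mem_iff, c₀.involutive x]
    · have : c.σ x ∉ B := fun h => by
        have := c.apply_of_notMem _ (fun h' => (mem_sdiff.mp h').2 h)
        rw [c.involutive] at this
        exact hx (this ▸ h)
      simp [hx, this, c.involutive x]
  commute x := by
    by_cases hx : x ∈ B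
    · simp [hx, rho_mem_iff hρ hB, c₀.commute]
    · simp [hx, rho_mem_iff hρ hB, c.commute]
  apply_of_notMem x hx := by
    have hxB : x ∉ B := fun h => hx (hBS h)
    simp [hxB, c.apply_of_notMem x (by simp [hx])]
  sign_of_ne x := by
    by_cases hx : x ∈ B
    · simpa [hx] using c₀.sign_of_ne x
    · simpa [hx] using c.sign_of_ne x
  sign_of_notMem x hx := by
    have hxB : x ∉ B := fun h => hx (hBS h)
    simp [hxB, c.sign_of_notMem x (by simp [hx])]
  sign_rho x hx := by
    by_cases hxB : x ∈ B
    · simpa [hxB, rho_mem_iff hρ hB] using c₀.sign_rho x hxB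
    · simpa [hxB, rho_mem_iff hρ hB] using c.sign_rho x (by simp [hx, hxB])

def restrict (c : SkewClanOn ρ S) (hcB : ∀ x ∈ B, c.σ x ∈ B) : SkewClanOn ρ (S \ B) where
  σ x := if x ∈ B then x else c.σ x
  sign x := if x ∈ B then true else c.sign x
  involutive x := by
    by_cases hx : x ∈ B
    · simp [hx]
    · have : c.σ x ∉ B := fun h => hx (c.involutive x ▸ hcB _ h)
      simp [hx, this, c.involutive x]
  commute x := by
    by_cases hx : x ∈ B
    · simp [hx, rho_mem_iff hρ hB]
    · simp [hx, rho_mem_iff hρ hB, c.commute]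
  apply_of_notMem x hx := by
    by_cases hxB : x ∈ B
    · simp [hxB]
    · simp [hxB, c.apply_of_notMem x (by simpa [hxB] using hx)]
  sign_of_ne x := by
    by_cases hx : x ∈ B
    · simp [hx]
    · simpa [hx] using c.sign_of_ne x
  sign_of_notMem x hx := by
    by_cases hxB : x ∈ B
    · simp [hxB]
    · simp [hxB, c.sign_of_notMem x (by simpa [hxB] using hx)]
  sign_rho x hx := by
    have hxB : x ∉ B := (mem_sdiff.mp hx).2
    simpa [hxB, rho_mem_iff hρ hB] using c.sign_rho x (mem_sdiff.mp hx).1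

def agreeEquiv (hBS : B ⊆ S) (c₀ : SkewClanOn ρ B) :
    {c : SkewClanOn ρ S // ∀ x ∈ B, c.σ x = c₀.σ x ∧ c.sign x = c₀.sign x} ≃
      SkewClanOn ρ (S \ B) where
  toFun c := c.1.restrict hρ hB fun x hx => (c.2 x hx).1 ▸ (c₀.apply_mem_iff.mpr hx)
  invFun c := ⟨glue hρ hB hBS c₀ c, fun x hx => by simp [glue, hx]⟩
  left_inv c := by
    ext x <;> by_cases hx : x ∈ B <;> simp [glue, restrict, hx, c.2 x]
  right_inv c := by
    ext x <;> by_cases hx : x ∈ B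
    · simp [glue, restrict, hx, c.apply_of_notMem x (by simp [hx])]
    · simp [glue, restrict, hx]
    · simp [glue, restrict, hx, c.sign_of_notMem x (by simp [hx])]
    · simp [glue, restrict, hx]

end Glue

lemma card_eq_sum_card_fiber [Finite α] {a : α} (ha : a ∈ S) :
    Nat.card (SkewClanOn ρ S) =
      ∑ j ∈ S, ∑ v : Bool, Nat.card {c : SkewClanOn ρ S // c.σ a = j ∧ c.sign a = v} := by
  let f : SkewClanOn ρ S → S × Bool := fun c => (⟨c.σ a, c.apply_mem_iff.mpr ha⟩, c.sign a)
  rw [← Nat.card_congr (Equiv.sigmaFiberEquiv f), Nat.card_sigma, Fintype.sum_prod_type,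
    ← sum_coe_sort S]
  refine sum_congr rfl fun j _ => sum_congr rfl fun v _ => Nat.card_congr ?_
  exact Equiv.subtypeEquivRight fun c => by simp [f, Prod.ext_iff, Subtype.ext_iff]

lemma card_fiber_false_of_ne {a j : α} (hj : j ≠ a) :
    Nat.card {c : SkewClanOn ρ S // c.σ a = j ∧ c.sign a = false} = 0 := by
  have : IsEmpty {c : SkewClanOn ρ S // c.σ a = j ∧ c.sign a = false} :=
    ⟨fun ⟨c, hσ, hs⟩ => by simp [c.sign_of_ne a (hσ ▸ hj)] at hs⟩
  exact Nat.card_of_isEmpty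

section Fibers

variable [DecidableEq α] {T : Finset α} (hρ : Involutive ρ)
include hρ

lemma sign_eq_true_of_apply_ne (c : SkewClanOn ρ S) {a : α} (ha : c.σ a ≠ a) :
    ∀ x ∈ rhoPair ρ a ∪ rhoPair ρ (c.σ a), c.sign x = true := by
  have hne : ∀ x ∈ rhoPair ρ a ∪ rhoPair ρ (c.σ a), c.σ x ≠ x := by
    simp only [rhoPair, mem_union, mem_insert, mem_singleton]
    rintro x ((rfl | rfl) | (rfl | rfl)) hx
    · exact ha hx
    · exact ha (hρ.injective (c.commute a ▸ hx))
    · exact ha (c.involutive a ▸ hx).symm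
    · rw [c.commute, c.involutive] at hx
      exact ha (hρ.injective hx).symm
  exact fun x hx => c.sign_of_ne x (hne x hx)

lemma eqOn_of_apply_eq (c : SkewClanOn ρ S) (d : SkewClanOn ρ T) {a : α}
    (haS : a ∈ S) (haT : a ∈ T) (hσ : c.σ a = d.σ a) (hs : c.sign a = d.sign a) :
    ∀ x ∈ rhoPair ρ a ∪ rhoPair ρ (c.σ a), c.σ x = d.σ x ∧ c.sign x = d.sign x := by
  have hσ' : ∀ x ∈ rhoPair ρ a ∪ rhoPair ρ (c.σ a), c.σ x = d.σ x := by
    simp only [rhoPair, mem_union, mem_insert, mem_singleton]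
    rintro x ((rfl | rfl) | (rfl | rfl))
    · exact hσ
    · rw [c.commute, d.commute, hσ]
    · rw [c.involutive, hσ, d.involutive]
    · rw [c.commute, d.commute, c.involutive, hσ, d.involutive]
  refine fun x hx => ⟨hσ' x hx, ?_⟩
  by_cases ha : c.σ a = a
  · have hd : d.σ a = a := hσ ▸ ha
    rw [ha, union_self, rhoPair, mem_insert, mem_singleton] at hx
    rcases hx with rfl | rfl
    · exact hs
    · rw [c.sign_rho a haS ha, d.sign_rho a haT hd, hs]
  · rw [c.sign_eq_true_of_apply_ne hρ ha x hx,
      d.sign_eq_true_of_apply_ne hρ (hσ ▸ ha) x (hσ ▸ hx)]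

lemma card_fiber {a j : α} {v : Bool} (c₀ : SkewClanOn ρ B) (hj : c₀.σ a = j)
    (hv : c₀.sign a = v) (hB : rhoPair ρ a ∪ rhoPair ρ j = B) (hBS : B ⊆ S) :
    Nat.card {c : SkewClanOn ρ S // c.σ a = j ∧ c.sign a = v} =
      Nat.card (SkewClanOn ρ (S \ B)) := by
  have haB : a ∈ B := hB ▸ by simp [rhoPair]
  refine Nat.card_congr ((Equiv.subtypeEquivRight fun c => ?_).trans
    (agreeEquiv hρ (fun x hx => hB ▸ rho_mem_rhoPair_union hρ (hB ▸ hx)) hBS c₀))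
  constructor
  · rintro ⟨hσ, hs⟩
    have := c.eqOn_of_apply_eq hρ c₀ (hBS haB) haB (hσ.trans hj.symm) (hv ▸ hs)
    rwa [hσ, hB] at this
  · intro h
    exact ⟨(h a haB).1.trans hj, (h a haB).2.trans hv⟩

end Fibers

section Recurrence

variable [DecidableEq α] (hρ : Involutive ρ) (hfp : ∀ x, ρ x ≠ x)
include hρ hfp

def fixedClan (a : α) (v : Bool) : SkewClanOn ρ (rhoPair ρ a) where
  σ := id
  sign x := if x = a then v else if x = ρ a then !v else true
  involutive _ := rfl
  commute _ := rfl
  apply_of_notMem _ _ := rfl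
  sign_of_ne _ h := absurd rfl h
  sign_of_notMem x hx := by
    simp only [rhoPair, mem_insert, mem_singleton, not_or] at hx
    simp [hx.1, hx.2]
  sign_rho x hx _ := by
    simp only [rhoPair, mem_insert, mem_singleton] at hx
    rcases hx with rfl | rfl <;> simp [hfp, hρ _]

def twistClan (a j : α) (hj : j ≠ a) : SkewClanOn ρ (rhoPair ρ a ∪ rhoPair ρ j) where
  σ x :=
    if x = a then j else if x = j then a else if x = ρ a then ρ j else if x = ρ j then ρ a else x
  sign _ := true
  involutive x := by
    have := hρ.injective
    unfold Involutive at hρ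
    grind
  commute x := by
    have := hρ.injective
    unfold Involutive at hρ
    grind
  apply_of_notMem x hx := by
    simp only [rhoPair, mem_union, mem_insert, mem_singleton, not_or] at hx
    simp [hx]
  sign_of_ne _ _ := rfl
  sign_of_notMem _ _ := rfl
  sign_rho x hx hfix := by
    have := hρ.injective
    unfold Involutive at hρ
    simp only [rhoPair, mem_union, mem_insert, mem_singleton] at hx
    grind

lemma card_eq_three_mul_add_sum [Finite α] (hS : ∀ x ∈ S, ρ x ∈ S) {a : α} (ha : a ∈ S) :
    Nat.card (SkewClanOn ρ S) = 3 * Nat.card (SkewClanOn ρ (S \ rhoPair ρ a)) +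
      ∑ j ∈ S \ rhoPair ρ a, Nat.card (SkewClanOn ρ ((S \ rhoPair ρ a) \ rhoPair ρ j)) := by
  have hpair := rhoPair_subset hS ha
  have hfixed (v : Bool) : Nat.card {c : SkewClanOn ρ S // c.σ a = a ∧ c.sign a = v} =
      Nat.card (SkewClanOn ρ (S \ rhoPair ρ a)) :=
    card_fiber hρ (fixedClan hρ hfp a v) rfl (by simp [fixedClan]) (union_self _) hpair
  have htwist {j : α} (hjS : j ∈ S) (hja : j ≠ a) :
      Nat.card {c : SkewClanOn ρ S // c.σ a = j ∧ c.sign a = true} =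
        Nat.card (SkewClanOn ρ (S \ (rhoPair ρ a ∪ rhoPair ρ j))) :=
    card_fiber hρ (twistClan hρ hfp a j hja) (by simp [twistClan]) rfl rfl
      (union_subset hpair (rhoPair_subset hS hjS))
  have hsum_pair (f : α → ℕ) : ∑ j ∈ rhoPair ρ a, f j = f a + f (ρ a) := sum_pair (hfp a).symm
  have hne {j : α} (hj : j ∈ S \ rhoPair ρ a) : j ≠ a := by
    rintro rfl
    simp [rhoPair] at hj
  rw [card_eq_sum_card_fiber ha, ← sum_sdiff hpair, hsum_pair]
  simp only [Fintype.sum_bool, hfixed, htwist (hS a ha) (hfp a), rhoPair_rho hρ, union_self,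
    card_fiber_false_of_ne (hfp a)]
  rw [sum_congr rfl fun j hj => by
    rw [htwist (mem_sdiff.mp hj).1 (hne hj), card_fiber_false_of_ne (hne hj),
      sdiff_union_distrib, ← Finset.sdiff_sdiff_left']]
  simp only [add_zero]
  ring

end Recurrence

def trivialClan : SkewClanOn ρ ∅ where
  σ := id
  sign _ := true
  involutive _ := rfl
  commute _ := rfl
  apply_of_notMem _ _ := rfl
  sign_of_ne _ _ := rfl
  sign_of_notMem _ _ := rfl
  sign_rho _ hx := absurd hx (notMem_empty _)

lemma card_empty : Nat.card (SkewClanOn ρ ∅) = 1 := by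
  refine Nat.card_eq_one_iff_unique.mpr ⟨⟨fun c d => ?_⟩, ⟨trivialClan⟩⟩
  ext x
  · rw [c.apply_of_notMem x (notMem_empty x), d.apply_of_notMem x (notMem_empty x)]
  · rw [c.sign_of_notMem x (notMem_empty x), d.sign_of_notMem x (notMem_empty x)]

lemma card_fixed_sign_true_eq [Fintype α] [DecidableEq α] (hρ : Involutive ρ)
    (c : SkewClanOn ρ univ) :
    #{x | c.σ x = x ∧ c.sign x = true} = #{x | c.σ x = x ∧ c.sign x = false} := by
  have hfix {x : α} (hx : c.σ x = x) : c.σ (ρ x) = ρ x := by rw [c.commute, hx]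
  refine card_nbij' ρ ρ (fun x hx => ?_) (fun x hx => ?_) (fun x _ => hρ x) (fun x _ => hρ x)
  · simp only [coe_filter, mem_univ, true_and] at hx ⊢
    exact ⟨hfix hx.1, by rw [c.sign_rho x (mem_univ x) hx.1, hx.2]; rfl⟩
  · simp only [coe_filter, mem_univ, true_and] at hx ⊢
    exact ⟨hfix hx.1, by rw [c.sign_rho x (mem_univ x) hx.1, hx.2]; rfl⟩

end SkewClanOn

def skewClanCount : ℕ → ℕ
  | 0 => 1
  | 1 => 3
  | n + 2 => 3 * skewClanCount (n + 1) + 2 * (n + 1) * skewClanCount n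

lemma skewClanCount_succ (n : ℕ) :
    skewClanCount (n + 1) = 3 * skewClanCount n + 2 * n * skewClanCount (n - 1) := by
  cases n <;> simp [skewClanCount]

theorem SkewClanOn.card_eq_skewClanCount [DecidableEq α] [Finite α] {ρ : α → α}
    (hρ : Involutive ρ) (hfp : ∀ x, ρ x ≠ x) (n : ℕ) {S : Finset α} (hS : ∀ x ∈ S, ρ x ∈ S)
    (hcard : #S = 2 * n) : Nat.card (SkewClanOn ρ S) = skewClanCount n := by
  induction n using Nat.strong_induction_on generalizing S with
  | _ n ih =>
  rcases n with _ | n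
  · rw [card_eq_zero.mp hcard, card_empty, skewClanCount]
  obtain ⟨a, ha⟩ : S.Nonempty := card_pos.mp (by omega)
  have hcard' : #(S \ rhoPair ρ a) = 2 * n := by rw [card_sdiff_rhoPair hfp hS ha]; omega
  have hS' := rho_mem_sdiff_rhoPair hρ hS (a := a)
  rw [card_eq_three_mul_add_sum hρ hfp hS ha, ih n (by omega) hS' hcard', skewClanCount_succ,
    sum_congr rfl fun j hj => ih (n - 1) (by omega) (rho_mem_sdiff_rhoPair hρ hS')
      (by rw [card_sdiff_rhoPair hfp hS' hj]; omega),
    sum_const, hcard', smul_eq_mul]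

lemma Fin.rev_ne_self {n : ℕ} (i : Fin (2 * n)) : i.rev ≠ i := by
  intro h
  have := congrArg Fin.val h
  rw [Fin.val_rev] at this
  omega

def skewClanEquiv (n : ℕ) :
    {p : Equiv.Perm (Fin (2 * n)) × (Fin (2 * n) → Bool) // IsSkewClan n p.1 p.2} ≃
      SkewClanOn Fin.rev (univ : Finset (Fin (2 * n))) where
  toFun p :=
    { σ := p.1.1
      sign := p.1.2
      involutive := p.2.1
      commute := p.2.2.2.2.1
      apply_of_notMem := fun x hx => absurd (mem_univ x) hx
      sign_of_ne := p.2.2.1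
      sign_of_notMem := fun x hx => absurd (mem_univ x) hx
      sign_rho := fun x _ => p.2.2.2.2.2 x }
  invFun c := ⟨(c.involutive.toPerm, c.sign), c.involutive, c.sign_of_ne,
    c.card_fixed_sign_true_eq Fin.rev_involutive, c.commute, fun x => c.sign_rho x (mem_univ x)⟩
  left_inv _ := Subtype.ext (Prod.ext (Equiv.ext fun _ => rfl) rfl)
  right_inv _ := rfl

lemma Znum_eq_skewClanCount (n : ℕ) : Znum n = skewClanCount n := by
  rw [Znum, Nat.card_congr (skewClanEquiv n)]
  exact SkewClanOn.card_eq_skewClanCount Fin.rev_involutive Fin.rev_ne_self n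
    (fun x _ => mem_univ _) (by simp)

/-- `Z_0 = 1`, `Z_1 = 3`, and `Z_n = 3·Z_{n−1} + 2(n−1)·Z_{n−2}` for `n ≥ 2`. -/
theorem stmt7 :
    Znum 0 = 1 ∧ Znum 1 = 3 ∧
    ∀ n : ℕ, 2 ≤ n → Znum n = 3 * Znum (n - 1) + 2 * (n - 1) * Znum (n - 2) := by
  simp only [Znum_eq_skewClanCount]
  refine ⟨rfl, rfl, fun n hn => ?_⟩
  obtain ⟨m, rfl⟩ := Nat.exists_eq_add_of_le' hn
  simp [skewClanCount]
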